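/- arXiv:1110.0729 — 2 statements merged into one kernel-verified Lean document; each statement's English description precedes it below -/
import Mathlib

section
/- For i = 1, 2 let h_i, b_i ∈ ℂ((z)) with h_i' ≠ 0 and 𝔳(h_i) < 0, c_i ∈ ℂ, and ρ_i = ρ_{(h_i,c_i,b_i)}. Let U ⊆ ℂ((z)) be a ℂ-subspace with U ≠ (0), dim_ℂ(U ∩ ℂ[[z]]) < ∞, and stabilizer A_U ≠ ℂ. (Forward) If ρ_i(L_k)(U) ⊆ U for all k ≥ −1 and both i = 1, 2, then there exist α ∈ ℂ*, β ∈ ℂ such that h_2 = α·h_1 + β, and the operator ρ_1(L_{−1}) − α·ρ_2(L_{−1}) equals the multiplication operator by (b_1 − b_2)/h_1', which belongs to A_U. (Converse) If h_2 = α·h_1 + β for some α ∈ ℂ*, β ∈ ℂ and ((b_1 − b_2)/h_1')·U ⊆ U, then ρ_1(L_k)(U) ⊆ U for all k ≥ −1 if and only if ρ_2(L_k)(U) ⊆ U for all k ≥ −1. -/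
set_option maxHeartbeats 1000000
set_option synthInstance.maxHeartbeats 1000000

noncomputable section

open Polynomial

/-- `K` is the field of formal Laurent series `ℂ((z))`. -/
abbrev K : Type := LaurentSeries ℂ

/-- The formal (termwise) derivative on `ℂ((z))`, as a `ℂ`-linear map. -/
def D : K →ₗ[ℂ] K where
  toFun f :=
    { coeff := fun n => ((n + 1 : ℤ) : ℂ) * f.coeff (n + 1)
      isPWO_support' := by
        have hsub : (Function.support fun n : ℤ => ((n + 1 : ℤ) : ℂ) * f.coeff (n + 1)) ⊆
            (fun m : ℤ => m - 1) '' (Function.support f.coeff) := by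
          intro n hn
          refine ⟨n + 1, fun h0 => hn (by simp [h0]), by ring⟩
        exact ((f.isPWO_support'.image_of_monotone
          (f := fun m : ℤ => m - 1) (fun a b hab => by dsimp only; omega))).mono hsub }
  map_add' f g := by
    ext n
    show ((n + 1 : ℤ) : ℂ) * (f + g).coeff (n + 1) = _
    simp [HahnSeries.coeff_add, mul_add]
  map_smul' c f := by
    ext n
    show ((n + 1 : ℤ) : ℂ) * (c • f).coeff (n + 1) = _
    simp only [HahnSeries.coeff_smul, RingHom.id_apply, smul_eq_mul]
    ring

instance : SMulCommClass ℂ K K where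
  smul_comm c x y := by
    simp only [smul_eq_mul]
    rw [← HahnSeries.C_mul_eq_smul, ← HahnSeries.C_mul_eq_smul]; ring

instance : IsScalarTower ℂ K K where
  smul_assoc c x y := by
    simp only [smul_eq_mul]
    rw [← HahnSeries.C_mul_eq_smul, ← HahnSeries.C_mul_eq_smul]; ring

/-- The first-order differential operator `ψ ↦ a·ψ' + m·ψ`. -/
def fdOp (a m : K) : Module.End ℂ K :=
  (LinearMap.mulLeft ℂ a).comp (D : K →ₗ[ℂ] K) + LinearMap.mulLeft ℂ m

/-- A `ℂ`-linear endomorphism of `ℂ((z))` is a first-order differential operator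
if it has the form `ψ ↦ a·ψ' + m·ψ` for some `a, m ∈ ℂ((z))`. -/
def IsFDO (P : Module.End ℂ K) : Prop := ∃ a m : K, P = fdOp a m

/-- The symbol `−h^(k+1)/h'` of `ρ_{(h,c,b)}(L_k)`. -/
def wittA (h : K) (k : ℤ) : K := -(h ^ (k + 1)) / D h

/-- The zeroth-order coefficient `−(k+1)·c·h^k + (h^(k+1)/h')·b` of `ρ_{(h,c,b)}(L_k)`. -/
def wittM (h : K) (c : ℂ) (b : K) (k : ℤ) : K :=
  (-(((k : ℂ) + 1) * c)) • h ^ k + (h ^ (k + 1) / D h) * b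

/-- The Witt family `ρ_{(h,c,b)}(L_k) : f ↦ −(h^{k+1}/h')·f' + (−(k+1)·c·h^k + (h^{k+1}/h')·b)·f`. -/
def wittOp (h : K) (c : ℂ) (b : K) (k : ℤ) : Module.End ℂ K :=
  fdOp (wittA h k) (wittM h c b k)

/-- The Laurent series `z`. -/
def zK : K := HahnSeries.single (1 : ℤ) (1 : ℂ)

/-- The residue: the coefficient of `z⁻¹`. -/
def Res (f : K) : ℂ := f.coeff (-1)

/-- The Gelfand–Fuchs cocycle, on the data `(a᷀1, m₁), (a₂, m₂)` of two first-order
differential operators `P_i : f ↦ a_i·f' + m_i·f`. -/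
def GF (a₁ m₁ a₂ m₂ : K) : ℂ :=
  (1/6 : ℂ) * Res (D (D a₁) * D a₂) + (1/2 : ℂ) * Res (D a₁ * D m₂)
    + (1/2 : ℂ) * Res (D (D m₁) * a₂) + Res (D m₁ * m₂)

/-- The Schwarzian derivative `S(h) = h'''/h' − (3/2)·(h''/h')²`. -/
def Sch (h : K) : K := D (D (D h)) / D h - (3/2 : ℂ) • (D (D h) / D h) ^ 2

/-- `ℂ[[z]]` as a `ℂ`-subspace of `ℂ((z))`. -/
def PS : Submodule ℂ K where
  carrier := {f : K | ∀ n : ℤ, n < 0 → f.coeff n = 0}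
  add_mem' := fun hf hg n hn => by simp [HahnSeries.coeff_add, hf n hn, hg n hn]
  zero_mem' := fun n _ => rfl
  smul_mem' := fun c f hf n hn => by simp [HahnSeries.coeff_smul, hf n hn]

-- aux lemmas part 1: D basics
lemma D_coeff (f : K) (n : ℤ) : (D f).coeff n = ((n + 1 : ℤ) : ℂ) * f.coeff (n + 1) := rfl

lemma D_support (f : K) : (D f).support ⊆ (fun m : ℤ => m - 1) '' (Function.support f.coeff) := by
  intro n hn
  refine ⟨n + 1, fun h0 => hn ?_, by ring⟩
  show ((n + 1 : ℤ) : ℂ) * f.coeff (n + 1) = 0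
  simp [h0]

lemma D_mul (f g : K) : D (f * g) = D f * g + f * D g := by
  ext n
  have hs : ((fun m : ℤ => m - 1) '' (Function.support f.coeff)).IsPWO :=
    f.isPWO_support'.image_of_monotone (f := fun m : ℤ => m - 1) (fun a b hab => by dsimp only; omega)
  have ht : ((fun m : ℤ => m - 1) '' (Function.support g.coeff)).IsPWO :=
    g.isPWO_support'.image_of_monotone (f := fun m : ℤ => m - 1) (fun a b hab => by dsimp only; omega)
  have h1 : (D f * g).coeff n = ∑ ij ∈ Finset.antidiagonal hs g.isPWO_support n,
      (D f).coeff ij.1 * g.coeff ij.2 := HahnSeries.coeff_mul_left' hs (D_support f)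
  have h2 : (f * D g).coeff n = ∑ ij ∈ Finset.antidiagonal f.isPWO_support ht n,
      f.coeff ij.1 * (D g).coeff ij.2 := HahnSeries.coeff_mul_right' ht (D_support g)
  have e1 : (D f * g).coeff n = ∑ ij ∈ Finset.antidiagonal f.isPWO_support g.isPWO_support (n+1),
      ((ij.1 : ℂ)) * f.coeff ij.1 * g.coeff ij.2 := by
    rw [h1]
    refine Finset.sum_nbij' (fun ij => (ij.1 + 1, ij.2)) (fun ij => (ij.1 - 1, ij.2)) ?_ ?_ ?_ ?_ ?_
    · rintro ⟨i, j⟩ hij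
      rw [Finset.mem_antidiagonal] at hij ⊢
      obtain ⟨⟨a, ha, rfl⟩, hj, hsum⟩ := hij
      exact ⟨by simpa using ha, hj, by dsimp only at hsum ⊢; omega⟩
    · rintro ⟨i, j⟩ hij
      rw [Finset.mem_antidiagonal] at hij ⊢
      obtain ⟨hi, hj, hsum⟩ := hij
      exact ⟨⟨i, hi, rfl⟩, hj, by dsimp only at hsum ⊢; omega⟩
    · rintro ⟨i, j⟩ _; simp
    · rintro ⟨i, j⟩ _; simp
    · rintro ⟨i, j⟩ _
      show (D f).coeff i * g.coeff j = _
      first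
      | (rw [D_coeff]; push_cast; ring)
      | rw [D_coeff]
  have e2 : (f * D g).coeff n = ∑ ij ∈ Finset.antidiagonal f.isPWO_support g.isPWO_support (n+1),
      f.coeff ij.1 * ((ij.2 : ℂ) * g.coeff ij.2) := by
    rw [h2]
    refine Finset.sum_nbij' (fun ij => (ij.1, ij.2 + 1)) (fun ij => (ij.1, ij.2 - 1)) ?_ ?_ ?_ ?_ ?_
    · rintro ⟨i, j⟩ hij
      rw [Finset.mem_antidiagonal] at hij ⊢
      obtain ⟨hi, ⟨a, ha, rfl⟩, hsum⟩ := hij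
      exact ⟨hi, by simpa using ha, by dsimp only at hsum ⊢; omega⟩
    · rintro ⟨i, j⟩ hij
      rw [Finset.mem_antidiagonal] at hij ⊢
      obtain ⟨hi, hj, hsum⟩ := hij
      exact ⟨hi, ⟨j, hj, rfl⟩, by dsimp only at hsum ⊢; omega⟩
    · rintro ⟨i, j⟩ _; simp
    · rintro ⟨i, j⟩ _; simp
    · rintro ⟨i, j⟩ _
      show f.coeff i * (D g).coeff j = _
      first
      | (rw [D_coeff]; push_cast; ring)
      | rw [D_coeff]
  rw [HahnSeries.coeff_add, e1, e2, ← Finset.sum_add_distrib, D_coeff, HahnSeries.coeff_mul,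
    Finset.mul_sum]
  refine Finset.sum_congr rfl ?_
  rintro ⟨i, j⟩ hij
  rw [Finset.mem_antidiagonal] at hij
  have : i + j = n + 1 := hij.2.2
  have : ((i : ℂ)) + (j : ℂ) = ((n : ℂ)) + 1 := by exact_mod_cast congrArg (fun m : ℤ => (m : ℂ)) this
  dsimp only
  push_cast
  rw [← this]; ring

-- aux part 2 : constants and kernel of D
lemma algebraMap_eq_C (c : ℂ) : algebraMap ℂ K c = HahnSeries.C c := by
  rw [HahnSeries.algebraMap_apply' (Γ := ℤ) (R := ℂ) (S := ℂ), PowerSeries.algebraMap_apply]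
  simp only [Algebra.algebraMap_self, RingHom.id_apply]
  rw [HahnSeries.ofPowerSeries_C]

lemma D_C (c : ℂ) : D (HahnSeries.C c) = 0 := by
  ext n
  rw [D_coeff]
  rcases eq_or_ne (n + 1) (0 : ℤ) with h | h
  · have h0 : ((n + 1 : ℤ) : ℂ) = 0 := by exact_mod_cast h
    rw [h0, zero_mul]
    rfl
  · have hc : (HahnSeries.C c : K).coeff (n + 1) = 0 := by
      show (HahnSeries.single (0 : ℤ) c).coeff (n + 1) = 0
      rw [HahnSeries.coeff_single]
      simp [h]
    rw [hc, mul_zero]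
    rfl

lemma eq_C_of_D_eq_zero {f : K} (hf : D f = 0) : f = HahnSeries.C (f.coeff 0) := by
  ext n
  rcases eq_or_ne n (0 : ℤ) with rfl | h
  · show f.coeff 0 = (HahnSeries.single (0:ℤ) (f.coeff 0)).coeff 0
    rw [HahnSeries.coeff_single_same]
  · have h1 : (D f).coeff (n - 1) = 0 := by rw [hf]; rfl
    rw [D_coeff] at h1
    have h2 : ((n - 1 + 1 : ℤ) : ℂ) ≠ 0 := by
      simpa using fun hn => h (by exact_mod_cast hn)
    have h3 : f.coeff n = 0 := by
      have := mul_eq_zero.mp h1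
      rcases this with h' | h'
      · exact absurd h' (by simpa using h2)
      · simpa using h'
    rw [h3]
    show (0 : ℂ) = (HahnSeries.single (0:ℤ) (f.coeff 0)).coeff n
    rw [HahnSeries.coeff_single]
    simp [h]

lemma D_ne_zero_of_nonconst {f : K} (hf : f ∉ Set.range (fun a : ℂ => algebraMap ℂ K a)) :
    D f ≠ 0 := fun h => hf ⟨f.coeff 0, by show algebraMap ℂ K _ = f; rw [algebraMap_eq_C]; exact (eq_C_of_D_eq_zero h).symm⟩

-- order of D f
lemma order_D {f : K} (hf : f.order < 0) : D f ≠ 0 ∧ (D f).order = f.order - 1 := by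
  have hf0 : f ≠ 0 := fun h => by rw [h, HahnSeries.order_zero] at hf; omega
  have hcoeff : (D f).coeff (f.order - 1) ≠ 0 := by
    rw [D_coeff]
    have h1 : ((f.order - 1 + 1 : ℤ) : ℂ) ≠ 0 := by
      have : f.order - 1 + 1 = f.order := by ring
      rw [this]
      exact_mod_cast fun h => (by omega : f.order ≠ 0) (by exact_mod_cast h)
    have h2 : f.coeff (f.order - 1 + 1) ≠ 0 := by
      have : f.order - 1 + 1 = f.order := by ring
      rw [this]
      exact (HahnSeries.coeff_order_eq_zero.not.mpr hf0)
    exact mul_ne_zero h1 h2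
  have hD0 : D f ≠ 0 := fun h => hcoeff (by rw [h]; rfl)
  refine ⟨hD0, le_antisymm (HahnSeries.order_le_of_coeff_ne_zero hcoeff) ?_⟩
  by_contra hlt
  push_neg at hlt
  have : (D f).coeff (D f).order = 0 := by
    rw [D_coeff]
    have : (D f).order + 1 < f.order := by omega
    rw [HahnSeries.coeff_eq_zero_of_lt_order this, mul_zero]
  exact (HahnSeries.coeff_order_eq_zero.not.mpr hD0) this

lemma order_smul_ne (α : ℂ) (hα : α ≠ 0) (f : K) : α • f = HahnSeries.C α * f := by
  rw [HahnSeries.C_mul_eq_smul]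

-- coefficient as a linear map
def coeffL (n : ℤ) : K →ₗ[ℂ] ℂ where
  toFun f := f.coeff n
  map_add' f g := rfl
  map_smul' c f := rfl

-- aux part 3 : operator algebra
lemma fdOp_apply (a m u : K) : fdOp a m u = a * D u + m * u := rfl

lemma wittOp_apply (h : K) (c : ℂ) (b : K) (k : ℤ) (u : K) :
    wittOp h c b k u = wittA h k * D u + wittM h c b k * u := rfl

lemma wittA_neg_one (h : K) : wittA h (-1) = -(D h)⁻¹ := by
  unfold wittA
  rw [show ((-1 : ℤ) + 1) = 0 by decide, zpow_zero]
  ring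

lemma wittM_neg_one (h : K) (c : ℂ) (b : K) : wittM h c b (-1) = (D h)⁻¹ * b := by
  unfold wittM
  rw [show ((-1 : ℤ) + 1) = 0 by decide, zpow_zero,
    show (((-1 : ℤ) : ℂ) + 1) = 0 by norm_num, zero_mul, neg_zero,
    ← HahnSeries.C_mul_eq_smul, map_zero, zero_mul, zero_add, one_div]

lemma wittOp_neg_one_apply (h : K) (c : ℂ) (b : K) (u : K) :
    wittOp h c b (-1) u = -((D h)⁻¹ * D u) + (D h)⁻¹ * b * u := by
  rw [wittOp_apply, wittA_neg_one, wittM_neg_one]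
  ring

/-- the commutator identity : `f·(P u) − P (f u) = (x·f')·u` for `P = ρ(L₋₁)`. -/
lemma comm_key (h : K) (c : ℂ) (b : K) (f u : K) :
    ((D h)⁻¹ * D f) * u
      = f * (wittOp h c b (-1) u) - wittOp h c b (-1) (f * u) := by
  rw [wittOp_neg_one_apply, wittOp_neg_one_apply, D_mul]
  ring

/-- `ρ(L_k) u = h^(k+1) · (ρ(L₋₁) u) − (k+1)c • (h^k u)`. -/
lemma wittOp_apply_eq (h : K) (c : ℂ) (b : K) (k : ℤ) (u : K) :
    wittOp h c b k u
      = h ^ (k+1) * (wittOp h c b (-1) u) - (((k:ℂ)+1)*c) • (h ^ k * u) := by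
  rw [wittOp_apply, wittOp_neg_one_apply]
  unfold wittA wittM
  rw [← HahnSeries.C_mul_eq_smul, ← HahnSeries.C_mul_eq_smul, map_neg]
  generalize h ^ (k+1 : ℤ) = A
  generalize h ^ (k : ℤ) = B
  ring

lemma D_affine (h₁ h₂ : K) (α β : ℂ) (hab : h₂ = α • h₁ + algebraMap ℂ K β) :
    D h₂ = α • D h₁ := by
  rw [hab, map_add, map_smul, algebraMap_eq_C, D_C, add_zero]

lemma P_relation (h₁ h₂ b₁ b₂ : K) (c₁ c₂ : ℂ) (α : ℂ) (hα : α ≠ 0)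
    (hh₁ : D h₁ ≠ 0) (hD : D h₂ = α • D h₁) (u : K) :
    wittOp h₂ c₂ b₂ (-1) u
      = α⁻¹ • (wittOp h₁ c₁ b₁ (-1) u - ((b₁ - b₂) / D h₁) * u) := by
  have hCα : (HahnSeries.C α : K) ≠ 0 := by
    intro h0
    apply hα
    have := congrArg (fun x : K => x.coeff 0) h0
    simpa [HahnSeries.coeff_single_same] using this
  rw [wittOp_neg_one_apply, wittOp_neg_one_apply, hD]
  simp only [← HahnSeries.C_mul_eq_smul]
  rw [map_inv₀]
  field_simp
  have h2 : D u / D h₁ * D h₁ = D u := div_mul_cancel₀ _ hh₁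
  have h3 : D h₁ * (D h₁)⁻¹ = 1 := mul_inv_cancel₀ hh₁
  linear_combination h2 / (α • D h₁) + (-(D u * (α • D h₁)⁻¹)) * h3

lemma zpow_mul_mem (h : K) (U : Submodule ℂ K) (hAU : ∀ u ∈ U, h * u ∈ U)
    (k : ℤ) (hk : 0 ≤ k) (u : K) (hu : u ∈ U) : h ^ k * u ∈ U := by
  lift k to ℕ using hk
  rw [zpow_natCast]
  induction k with
  | zero => simpa using hu
  | succ n ih =>
      rw [pow_succ']
      rw [mul_assoc]
      exact hAU _ ih

-- aux part 4 : order and finiteness arguments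
lemma linearIndependent_of_orders (p : Submodule ℂ K) (v : ℕ → K) (hvp : ∀ i, v i ∈ p)
    (h0 : ∀ i, v i ≠ 0)
    (hmono : StrictMono fun i => (v i).order) :
    LinearIndependent ℂ (fun i => (⟨v i, hvp i⟩ : ↥p)) := by
  have hiff := linearIndependent_iff' (R := ℂ) (v := fun i => (⟨v i, hvp i⟩ : ↥p))
  refine hiff.mpr ?_
  intro s g hsum i hi
  have h2 : p.subtype (∑ j ∈ s, g j • (⟨v j, hvp j⟩ : ↥p)) = p.subtype 0 := congrArg _ hsum
  rw [map_sum, map_zero] at h2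
  simp only [map_smul, Submodule.subtype_apply] at h2
  have hsum' : ∑ j ∈ s, g j • v j = 0 := h2
  by_contra hgi
  classical
  set t := s.filter (fun j => g j ≠ 0) with ht
  have hti : i ∈ t := Finset.mem_filter.mpr ⟨hi, hgi⟩
  have htne : t.Nonempty := ⟨i, hti⟩
  set i₀ := t.min' htne with hi₀
  have hi₀t : i₀ ∈ t := t.min'_mem htne
  have hcoeff : (coeffL ((v i₀).order)) (∑ j ∈ s, g j • v j) = 0 := by
    rw [hsum']; exact map_zero _
  rw [map_sum] at hcoeff
  have hterm : ∀ j ∈ s, j ≠ i₀ → (coeffL ((v i₀).order)) (g j • v j) = 0 := by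
    intro j hj hne
    show g j • (v j).coeff ((v i₀).order) = 0
    rcases eq_or_ne (g j) 0 with h' | h'
    · rw [h', zero_smul]
    · have hjt : j ∈ t := Finset.mem_filter.mpr ⟨hj, h'⟩
      have : i₀ < j := lt_of_le_of_ne (t.min'_le j hjt) (fun h => hne h.symm)
      have horder : (v i₀).order < (v j).order := hmono this
      rw [HahnSeries.coeff_eq_zero_of_lt_order horder, smul_zero]
  rw [Finset.sum_eq_single i₀ hterm (fun h => absurd (Finset.mem_filter.mp hi₀t).1 h)] at hcoeff
  have : g i₀ • (v i₀).coeff ((v i₀).order) = 0 := hcoeff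
  have hne : (v i₀).coeff ((v i₀).order) ≠ 0 := (HahnSeries.coeff_order_eq_zero.not.mpr (h0 i₀))
  have : g i₀ = 0 := by
    rcases smul_eq_zero.mp this with h' | h'
    · exact h'
    · exact absurd h' hne
  exact (Finset.mem_filter.mp hi₀t).2 this

lemma no_pos_order (U : Submodule ℂ K) (hU0 : U ≠ ⊥)
    (hfin : FiniteDimensional ℂ ↥(U ⊓ PS)) (f : K)
    (hfU : ∀ u ∈ U, f * u ∈ U) (hf0 : f ≠ 0) (hord : 0 < f.order) : False := by
  obtain ⟨u, huU, hu0⟩ := (Submodule.ne_bot_iff U).mp hU0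
  have hpow : ∀ n : ℕ, f ^ n * u ∈ U := by
    intro n
    induction n with
    | zero => simpa using huU
    | succ m ih => rw [pow_succ', mul_assoc]; exact hfU _ ih
  have hfn0 : ∀ n : ℕ, f ^ n * u ≠ 0 := fun n => mul_ne_zero (pow_ne_zero n hf0) hu0
  have hordn : ∀ n : ℕ, (f ^ n * u).order = n * f.order + u.order := by
    intro n
    rw [HahnSeries.order_mul (pow_ne_zero n hf0) hu0, HahnSeries.order_pow, nsmul_eq_mul]
  set N : ℕ := (-u.order).toNat + 1 with hN
  set v : ℕ → K := fun i => f ^ (N + i) * u with hv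
  have hvU : ∀ i, v i ∈ U := fun i => hpow _
  have hv0 : ∀ i, v i ≠ 0 := fun i => hfn0 _
  have hvord : ∀ i, (v i).order = (N + i : ℕ) * f.order + u.order := fun i => hordn _
  have hvpos : ∀ i, 0 < (v i).order := by
    intro i
    rw [hvord]
    have h1 : (1 : ℤ) ≤ f.order := hord
    have h2 : ((N + i : ℕ) : ℤ) * 1 ≤ ((N + i : ℕ) : ℤ) * f.order :=
      mul_le_mul_of_nonneg_left h1 (by positivity)
    have h3 : (-u.order) ≤ ((-u.order).toNat : ℤ) := Int.self_le_toNat _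
    push_cast at h2 ⊢
    omega
  have hvPS : ∀ i, v i ∈ PS := by
    intro i n hn
    exact HahnSeries.coeff_eq_zero_of_lt_order (lt_trans hn (hvpos i))
  have hmono : StrictMono fun i => (v i).order := by
    intro i j hij
    show (v i).order < (v j).order
    rw [hvord, hvord]
    have h1 : (1 : ℤ) ≤ f.order := hord
    have : ((N + i : ℕ) : ℤ) < ((N + j : ℕ) : ℤ) := by exact_mod_cast by omega
    nlinarith
  have hvip : ∀ i, v i ∈ U ⊓ PS := fun i => Submodule.mem_inf.mpr ⟨hvU i, hvPS i⟩
  have hwind : LinearIndependent ℂ (fun i => (⟨v i, hvip i⟩ : ↥(U ⊓ PS))) :=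
    linearIndependent_of_orders (U ⊓ PS) v hvip hv0 hmono
  exact Module.Finite.not_linearIndependent_of_infinite
    (v := fun i => (⟨v i, hvip i⟩ : ↥(U ⊓ PS))) hwind

lemma order_neg_of_AU (U : Submodule ℂ K) (hU0 : U ≠ ⊥)
    (hfin : FiniteDimensional ℂ ↥(U ⊓ PS)) (f : K)
    (hfU : ∀ u ∈ U, f * u ∈ U)
    (hnc : f ∉ Set.range fun a : ℂ => algebraMap ℂ K a) : f.order < 0 := by
  have hf0 : f ≠ 0 := by
    intro h
    exact hnc ⟨0, by rw [h]; show algebraMap ℂ K 0 = 0; rw [map_zero]⟩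
  by_contra hge
  push_neg at hge
  rcases lt_or_eq_of_le hge with hpos | heq
  · exact no_pos_order U hU0 hfin f hfU hf0 hpos
  · set g : K := f - HahnSeries.C (f.coeff 0) with hg
    have hgU : ∀ u ∈ U, g * u ∈ U := by
      intro u hu
      rw [hg, sub_mul, HahnSeries.C_mul_eq_smul]
      exact Submodule.sub_mem U (hfU u hu) (Submodule.smul_mem U _ hu)
    have hg0 : g ≠ 0 := by
      intro h
      apply hnc
      refine ⟨f.coeff 0, ?_⟩
      show algebraMap ℂ K (f.coeff 0) = f
      rw [algebraMap_eq_C]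
      rw [hg] at h
      linear_combination -h
    have hgcoeff : ∀ n : ℤ, n ≤ 0 → g.coeff n = 0 := by
      intro n hn
      rcases eq_or_ne n 0 with rfl | hne
      · have hcc : (HahnSeries.C (f.coeff 0) : K).coeff 0 = f.coeff 0 := by
          show (HahnSeries.single (0:ℤ) (f.coeff 0)).coeff 0 = f.coeff 0
          exact HahnSeries.coeff_single_same _ _
        rw [hg, HahnSeries.coeff_sub]
        linear_combination -hcc
      · have h1 : f.coeff n = 0 := HahnSeries.coeff_eq_zero_of_lt_order (by omega)
        have h2 : (HahnSeries.C (f.coeff 0)).coeff n = 0 := by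
          show (HahnSeries.single (0:ℤ) (f.coeff 0)).coeff n = 0
          rw [HahnSeries.coeff_single]
          simp [hne]
        show f.coeff n - (HahnSeries.C (f.coeff 0)).coeff n = 0
        rw [h1, h2, sub_zero]
    have hgord : 0 < g.order := by
      by_contra hle
      push_neg at hle
      exact (HahnSeries.coeff_order_eq_zero.not.mpr hg0) (hgcoeff _ hle)
    exact no_pos_order U hU0 hfin g hgU hg0 hgord

-- aux part 5 : main lemma, h ∈ A_U
lemma AU_deriv (h : K) (c : ℂ) (b : K) (U : Submodule ℂ K)
    (hinv : ∀ u ∈ U, wittOp h c b (-1) u ∈ U)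
    (f : K) (hf : ∀ u ∈ U, f * u ∈ U) :
    ∀ u ∈ U, ((D h)⁻¹ * D f) * u ∈ U := by
  intro u hu
  rw [comm_key h c b f u]
  exact Submodule.sub_mem U (hf _ (hinv u hu)) (hinv _ (hf u hu))

lemma h_mem_AU (h b : K) (c : ℂ) (hh : D h ≠ 0) (ho : h.order < 0)
    (U : Submodule ℂ K) (hU0 : U ≠ ⊥) (hfin : FiniteDimensional ℂ ↥(U ⊓ PS))
    (hinv : ∀ u ∈ U, wittOp h c b (-1) u ∈ U)
    (f : K) (hfU : ∀ u ∈ U, f * u ∈ U)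
    (hnc : f ∉ Set.range fun a : ℂ => algebraMap ℂ K a) :
    ∀ u ∈ U, h * u ∈ U := by
  suffices H : ∀ d : ℕ, ∀ f : K, (∀ u ∈ U, f * u ∈ U) →
      f ∉ Set.range (fun a : ℂ => algebraMap ℂ K a) → (-f.order).toNat ≤ d →
      (∀ u ∈ U, h * u ∈ U) from H (-f.order).toNat f hfU hnc le_rfl
  intro d
  induction d with
  | zero =>
    intro f hfU hnc hle
    have hford := order_neg_of_AU U hU0 hfin f hfU hnc
    exfalso
    omega
  | succ d ih =>
    intro f hfU hnc hle
    have hford : f.order < 0 := order_neg_of_AU U hU0 hfin f hfU hnc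
    have hDf : D f ≠ 0 := D_ne_zero_of_nonconst hnc
    set g : K := (D h)⁻¹ * D f with hgdef
    have hgU : ∀ u ∈ U, g * u ∈ U := AU_deriv h c b U hinv f hfU
    have hg0 : g ≠ 0 := mul_ne_zero (inv_ne_zero hh) hDf
    have hDford : (D f).order = f.order - 1 := (order_D hford).2
    have hDhord : (D h).order = h.order - 1 := (order_D ho).2
    have hxord : ((D h)⁻¹).order = -(D h).order := by
      have h1 : (D h)⁻¹ * D h = 1 := inv_mul_cancel₀ hh
      have h2 := HahnSeries.order_mul (inv_ne_zero hh) hh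
      rw [h1, HahnSeries.order_one] at h2
      omega
    have hgord : g.order = f.order - h.order := by
      rw [hgdef, HahnSeries.order_mul (inv_ne_zero hh) hDf, hxord, hDhord, hDford]
      ring
    by_cases hgc : g ∈ Set.range (fun a : ℂ => algebraMap ℂ K a)
    · obtain ⟨γ, hγ⟩ := hgc
      have hgC : g = HahnSeries.C γ := by
        rw [← algebraMap_eq_C]
        exact hγ.symm
      have hγ0 : γ ≠ 0 := by
        rintro rfl
        apply hg0
        rw [hgC, map_zero]
      have hmul : D h * g = D f := by
        rw [hgdef, ← mul_assoc, mul_inv_cancel₀ hh, one_mul]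
      have hDfγ : D f = HahnSeries.C γ * D h := by
        rw [← hmul, hgC]
        ring
      have hDsub : D (f - γ • h) = 0 := by
        rw [map_sub, map_smul, hDfγ, HahnSeries.C_mul_eq_smul, sub_self]
      have hconst := eq_C_of_D_eq_zero hDsub
      set δ := (f - γ • h).coeff 0 with hδ
      have h1 : HahnSeries.C γ * h = f - HahnSeries.C δ := by
        rw [← HahnSeries.C_mul_eq_smul] at hconst
        linear_combination -hconst
      have hCγ0 : (HahnSeries.C γ : K) ≠ 0 := HahnSeries.C_ne_zero hγ0
      have hh_eq : h = HahnSeries.C γ⁻¹ * (f - HahnSeries.C δ) := by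
        rw [map_inv₀, ← h1, ← mul_assoc, inv_mul_cancel₀ hCγ0, one_mul]
      intro u hu
      have hcomp : h * u = γ⁻¹ • (f * u - δ • u) := by
        rw [hh_eq, mul_assoc, sub_mul, HahnSeries.C_mul_eq_smul, HahnSeries.C_mul_eq_smul]
      rw [hcomp]
      exact Submodule.smul_mem U _ (Submodule.sub_mem U (hfU u hu) (Submodule.smul_mem U _ hu))
    · have hgord2 : g.order < 0 := order_neg_of_AU U hU0 hfin g hgU hgc
      exact ih g hgU hgc (by omega)

-- aux part 6 : one direction of the converse
lemma converse_dir (h₁ h₂ b₁ b₂ : K) (c₁ c₂ : ℂ) (α β : ℂ) (hα0 : α ≠ 0)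
    (hh₁ : D h₁ ≠ 0) (ho₁ : h₁.order < 0)
    (U : Submodule ℂ K) (hU0 : U ≠ ⊥) (hfin : FiniteDimensional ℂ ↥(U ⊓ PS))
    (hA : ∃ f : K, (∀ u ∈ U, f * u ∈ U) ∧ f ∉ Set.range (fun a : ℂ => algebraMap ℂ K a))
    (hab : h₂ = α • h₁ + algebraMap ℂ K β)
    (hm₀ : ∀ u ∈ U, ((b₁ - b₂) / D h₁) * u ∈ U)
    (hinv1 : ∀ k : ℤ, -1 ≤ k → ∀ u ∈ U, wittOp h₁ c₁ b₁ k u ∈ U) :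
    ∀ k : ℤ, -1 ≤ k → ∀ u ∈ U, wittOp h₂ c₂ b₂ k u ∈ U := by
  have hD2 : D h₂ = α • D h₁ := D_affine h₁ h₂ α β hab
  have hP1 : ∀ u ∈ U, wittOp h₁ c₁ b₁ (-1) u ∈ U := fun u hu => hinv1 (-1) le_rfl u hu
  obtain ⟨f, hfU, hfnc⟩ := hA
  have hA1 : ∀ u ∈ U, h₁ * u ∈ U := h_mem_AU h₁ b₁ c₁ hh₁ ho₁ U hU0 hfin hP1 f hfU hfnc
  have hA2 : ∀ u ∈ U, h₂ * u ∈ U := by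
    intro u hu
    rw [hab, add_mul, smul_mul_assoc, algebraMap_eq_C, HahnSeries.C_mul_eq_smul]
    exact Submodule.add_mem U (Submodule.smul_mem U _ (hA1 u hu)) (Submodule.smul_mem U _ hu)
  have hP2 : ∀ u ∈ U, wittOp h₂ c₂ b₂ (-1) u ∈ U := by
    intro u hu
    rw [P_relation h₁ h₂ b₁ b₂ c₁ c₂ α hα0 hh₁ hD2 u]
    exact Submodule.smul_mem U _ (Submodule.sub_mem U (hP1 u hu) (hm₀ u hu))
  intro k hk u hu
  rw [wittOp_apply_eq h₂ c₂ b₂ k u]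
  refine Submodule.sub_mem U ?_ ?_
  · exact zpow_mul_mem h₂ U hA2 (k+1) (by omega) _ (hP2 u hu)
  · rcases eq_or_lt_of_le hk with heq | hlt
    · rw [← heq, show ((((-1 : ℤ) : ℂ)) + 1) * c₂ = 0 by norm_num,
        ← HahnSeries.C_mul_eq_smul, map_zero, zero_mul]
      exact Submodule.zero_mem U
    · exact Submodule.smul_mem U _ (zpow_mul_mem h₂ U hA2 k (by omega) u hu)

/-- Proposition `SameUimpliesSameb`. -/
theorem statement12 (h₁ h₂ b₁ b₂ : K) (c₁ c₂ : ℂ)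
    (hh₁ : D h₁ ≠ 0) (hh₂ : D h₂ ≠ 0)
    (ho₁ : h₁.order < 0) (ho₂ : h₂.order < 0)
    (U : Submodule ℂ K) (hU0 : U ≠ ⊥)
    (hfin : FiniteDimensional ℂ ↥(U ⊓ PS))
    (hA : ∃ f : K, (∀ u ∈ U, f * u ∈ U) ∧ f ∉ Set.range (fun a : ℂ => algebraMap ℂ K a)) :
    ((∀ k : ℤ, -1 ≤ k → ∀ u ∈ U, wittOp h₁ c₁ b₁ k u ∈ U) →
      (∀ k : ℤ, -1 ≤ k → ∀ u ∈ U, wittOp h₂ c₂ b₂ k u ∈ U) →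
      ∃ α β : ℂ, α ≠ 0 ∧ h₂ = α • h₁ + algebraMap ℂ K β ∧
        wittOp h₁ c₁ b₁ (-1) - α • wittOp h₂ c₂ b₂ (-1)
          = LinearMap.mulLeft ℂ ((b₁ - b₂) / D h₁) ∧
        (∀ u ∈ U, ((b₁ - b₂) / D h₁) * u ∈ U))
    ∧
    (∀ α β : ℂ, α ≠ 0 → h₂ = α • h₁ + algebraMap ℂ K β →
      (∀ u ∈ U, ((b₁ - b₂) / D h₁) * u ∈ U) →
      ((∀ k : ℤ, -1 ≤ k → ∀ u ∈ U, wittOp h₁ c₁ b₁ k u ∈ U) ↔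
        (∀ k : ℤ, -1 ≤ k → ∀ u ∈ U, wittOp h₂ c₂ b₂ k u ∈ U))) := by
  constructor
  · -- forward direction
    intro hinv1 hinv2
    obtain ⟨f, hfU, hfnc⟩ := hA
    have hP1 : ∀ u ∈ U, wittOp h₁ c₁ b₁ (-1) u ∈ U := fun u hu => hinv1 (-1) le_rfl u hu
    have hP2 : ∀ u ∈ U, wittOp h₂ c₂ b₂ (-1) u ∈ U := fun u hu => hinv2 (-1) le_rfl u hu
    have hA1 : ∀ u ∈ U, h₁ * u ∈ U := h_mem_AU h₁ b₁ c₁ hh₁ ho₁ U hU0 hfin hP1 f hfU hfnc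
    have hA2 : ∀ u ∈ U, h₂ * u ∈ U := h_mem_AU h₂ b₂ c₂ hh₂ ho₂ U hU0 hfin hP2 f hfU hfnc
    set w : K := (D h₁)⁻¹ * D h₂ with hw
    set v : K := (D h₂)⁻¹ * D h₁ with hv
    have hwU : ∀ u ∈ U, w * u ∈ U := AU_deriv h₁ c₁ b₁ U hP1 h₂ hA2
    have hvU : ∀ u ∈ U, v * u ∈ U := AU_deriv h₂ c₂ b₂ U hP2 h₁ hA1
    have hw0 : w ≠ 0 := mul_ne_zero (inv_ne_zero hh₁) hh₂
    have hv0 : v ≠ 0 := mul_ne_zero (inv_ne_zero hh₂) hh₁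
    have hwv : w * v = 1 := by
      rw [hw, hv]
      have hre : ((D h₁)⁻¹ * D h₂) * ((D h₂)⁻¹ * D h₁)
          = ((D h₁)⁻¹ * D h₁) * ((D h₂)⁻¹ * D h₂) := by ring
      rw [hre, inv_mul_cancel₀ hh₁, inv_mul_cancel₀ hh₂, one_mul]
    have hconst : w ∈ Set.range (fun a : ℂ => algebraMap ℂ K a) := by
      by_contra hwc
      have hvc : v ∉ Set.range (fun a : ℂ => algebraMap ℂ K a) := by
        rintro ⟨γ, hγ⟩
        have hvC : v = HahnSeries.C γ := by rw [← algebraMap_eq_C]; exact hγ.symm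
        have hγ0 : γ ≠ 0 := by
          rintro rfl
          apply hv0
          rw [hvC, map_zero]
        apply hwc
        refine ⟨γ⁻¹, ?_⟩
        show algebraMap ℂ K γ⁻¹ = w
        have hwinv : w = v⁻¹ := eq_inv_of_mul_eq_one_left (by rw [mul_comm] at hwv ⊢; exact hwv)
        rw [algebraMap_eq_C, map_inv₀, ← hvC, ← hwinv]
      have h1 := order_neg_of_AU U hU0 hfin w hwU hwc
      have h2 := order_neg_of_AU U hU0 hfin v hvU hvc
      have h3 := HahnSeries.order_mul hw0 hv0
      rw [hwv, HahnSeries.order_one] at h3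
      omega
    obtain ⟨α, hα⟩ := hconst
    have hαC : w = HahnSeries.C α := by rw [← algebraMap_eq_C]; exact hα.symm
    have hα0 : α ≠ 0 := by
      rintro rfl
      apply hw0
      rw [hαC, map_zero]
    have hD2 : D h₂ = α • D h₁ := by
      have hcan : D h₁ * w = D h₂ := by rw [hw, ← mul_assoc, mul_inv_cancel₀ hh₁, one_mul]
      rw [← hcan, hαC, mul_comm, HahnSeries.C_mul_eq_smul]
    have hDsub : D (h₂ - α • h₁) = 0 := by rw [map_sub, map_smul, hD2, sub_self]
    have hβ := eq_C_of_D_eq_zero hDsub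
    refine ⟨α, (h₂ - α • h₁).coeff 0, hα0, ?_, ?_, ?_⟩
    · rw [algebraMap_eq_C, ← hβ]
      ring
    · ext u
      simp only [LinearMap.sub_apply, LinearMap.smul_apply, LinearMap.mulLeft_apply]
      rw [P_relation h₁ h₂ b₁ b₂ c₁ c₂ α hα0 hh₁ hD2 u, smul_smul, mul_inv_cancel₀ hα0,
        one_smul, sub_sub_cancel]
    · intro u hu
      have heq : ((b₁ - b₂) / D h₁) * u
          = wittOp h₁ c₁ b₁ (-1) u - α • wittOp h₂ c₂ b₂ (-1) u := by
        rw [P_relation h₁ h₂ b₁ b₂ c₁ c₂ α hα0 hh₁ hD2 u, smul_smul, mul_inv_cancel₀ hα0,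
          one_smul, sub_sub_cancel]
      rw [heq]
      exact Submodule.sub_mem U (hP1 u hu) (Submodule.smul_mem U α (hP2 u hu))
  · -- converse direction
    intro α β hα0 hab hm₀
    have hD2 : D h₂ = α • D h₁ := D_affine h₁ h₂ α β hab
    have hab' : h₁ = α⁻¹ • h₂ + algebraMap ℂ K (-(α⁻¹ * β)) := by
      symm
      rw [hab, algebraMap_eq_C, algebraMap_eq_C, ← HahnSeries.C_mul_eq_smul,
        ← HahnSeries.C_mul_eq_smul, mul_add, ← mul_assoc, ← map_mul,
        inv_mul_cancel₀ hα0, map_one, one_mul, ← map_mul, map_neg]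
      ring
    have hm₀' : ∀ u ∈ U, ((b₂ - b₁) / D h₂) * u ∈ U := by
      have hCα0 : (HahnSeries.C α : K) ≠ 0 := HahnSeries.C_ne_zero hα0
      have hrel : ∀ u : K, ((b₂ - b₁) / D h₂) * u
          = (-(α⁻¹)) • (((b₁ - b₂) / D h₁) * u) := by
        intro u
        rw [hD2, ← HahnSeries.C_mul_eq_smul, ← HahnSeries.C_mul_eq_smul, map_neg, map_inv₀]
        field_simp
        ring
      intro u hu
      rw [hrel u]
      exact Submodule.smul_mem U _ (hm₀ u hu)
    constructor
    · exact converse_dir h₁ h₂ b₁ b₂ c₁ c₂ α β hα0 hh₁ ho₁ U hU0 hfin hA hab hm₀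
    · exact converse_dir h₂ h₁ b₂ b₁ c₂ c₁ α⁻¹ (-(α⁻¹ * β)) (inv_ne_zero hα0) hh₂ ho₂ U hU0
        hfin hA hab' hm₀'

end
end

section
/- Let u ∈ ℂ[X] be a polynomial and let u' denote its derivative. Then the polynomial Y² − 2·u(X)·Y + (u(X)² + u'(X)), regarded as an element of (ℂ[X])[Y], is irreducible if and only if u' is not the square of a polynomial in ℂ[X]. -/
set_option maxHeartbeats 1000000
set_option synthInstance.maxHeartbeats 1000000

noncomputable section

open Polynomial

abbrev F : Type := FractionRing (Polynomial ℂ)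

lemma sq_key (d : Polynomial ℂ) :
    (∃ c : F, c ^ 2 = - algebraMap (Polynomial ℂ) F d) ↔ ∃ w : Polynomial ℂ, d = w ^ 2 := by
  set φ := algebraMap (Polynomial ℂ) F
  constructor
  · rintro ⟨c, hc⟩
    set e : F := φ (Polynomial.C Complex.I) * c with he
    have he2 : e ^ 2 = φ d := by
      have : (Polynomial.C Complex.I : Polynomial ℂ) ^ 2 = -1 := by
        rw [← map_pow, Complex.I_sq, map_neg, map_one]
      rw [he, mul_pow, ← map_pow, this, hc]
      simp
    have hint : IsIntegral (Polynomial ℂ) e := by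
      refine ⟨Polynomial.X ^ 2 - Polynomial.C d, monic_X_pow_sub_C d (by norm_num), ?_⟩
      simp [Polynomial.eval₂_sub, he2]
      exact sub_self _
    obtain ⟨w, hw⟩ := IsIntegrallyClosed.isIntegral_iff.mp hint
    refine ⟨w, IsFractionRing.injective (Polynomial ℂ) F ?_⟩
    rw [map_pow, hw, he2]
  · rintro ⟨w, hw⟩
    refine ⟨φ (Polynomial.C Complex.I * w), ?_⟩
    rw [← map_pow, mul_pow, ← map_pow, Complex.I_sq, hw]
    simp


/-- spectral curve: `Y² − 2u(X)Y + (u(X)² + u'(X)) ∈ (ℂ[X])[Y]` is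
irreducible iff `u'` is not the square of a polynomial. -/
theorem statement13 (u : Polynomial ℂ) :
    Irreducible ((Polynomial.X : Polynomial (Polynomial ℂ)) ^ 2
        - Polynomial.C (2 * u) * Polynomial.X
        + Polynomial.C (u ^ 2 + Polynomial.derivative u)) ↔
      ¬∃ w : Polynomial ℂ, Polynomial.derivative u = w ^ 2 := by
  set d := Polynomial.derivative u with hd
  set φ := algebraMap (Polynomial ℂ) F with hφ
  set p : Polynomial (Polynomial ℂ) :=
    Polynomial.X ^ 2 - Polynomial.C (2 * u) * Polynomial.X + Polynomial.C (u ^ 2 + d) with hp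
  have hmon : p.Monic := by
    have h1 : p = Polynomial.X ^ 2
        + (-(Polynomial.C (2 * u) * Polynomial.X) + Polynomial.C (u ^ 2 + d)) := by
      rw [hp]; ring
    rw [h1]
    refine monic_X_pow_add ?_
    refine lt_of_le_of_lt (Polynomial.degree_add_le _ _) ?_
    rw [Polynomial.degree_neg]
    refine max_lt (lt_of_le_of_lt (Polynomial.degree_mul_le _ _) ?_)
      (lt_of_le_of_lt Polynomial.degree_C_le (by norm_num))
    refine lt_of_le_of_lt (add_le_add Polynomial.degree_C_le Polynomial.degree_X_le) ?_
    norm_num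
  rw [hmon.irreducible_iff_irreducible_map_fraction_map (K := F)]
  have hmap : p.map φ = Polynomial.X ^ 2 - Polynomial.C (φ (2 * u)) * Polynomial.X
      + Polynomial.C (φ (u ^ 2 + d)) := by
    simp [hp, Polynomial.map_add, Polynomial.map_sub, Polynomial.map_mul, Polynomial.map_pow]
  have hdeg : (p.map φ).natDegree = 2 := by
    rw [hmap]
    compute_degree!
  rw [Polynomial.irreducible_iff_roots_eq_zero_of_degree_le_three (by rw [← hφ, hdeg]) (by rw [← hφ, hdeg]; norm_num)]
  have hne : p.map φ ≠ 0 := (hmon.map φ).ne_zero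
  rw [Multiset.eq_zero_iff_forall_notMem]
  simp only [← hφ, Polynomial.mem_roots hne]
  have heval : ∀ x : F, (p.map φ).IsRoot x ↔ (x - φ u) ^ 2 = - φ d := by
    intro x
    have hφ2 : φ (2 * u) = 2 * φ u := by rw [map_mul, map_ofNat]
    have hφud : φ (u ^ 2 + d) = φ u ^ 2 + φ d := by rw [map_add, map_pow]
    rw [Polynomial.IsRoot, hmap, hφ2, hφud]
    simp only [Polynomial.eval_add, Polynomial.eval_sub, Polynomial.eval_mul,
      Polynomial.eval_pow, Polynomial.eval_X, Polynomial.eval_C]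
    constructor <;> intro h <;> linear_combination h
  rw [← sq_key d]
  constructor
  · rintro h ⟨c, hc⟩
    exact h (c + φ u) ((heval _).mpr (by rwa [add_sub_cancel_right]))
  · rintro h x hx
    exact h ⟨x - φ u, (heval x).mp hx⟩


end
end
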